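/- Let G be a finite tree with n ≥ 3 vertices, all of degree less than n/(log n)^{1+ε}, and let x be a vertex such that all components of G − x have size at most n/2. Define, for the components H of G − x, the index sets I = {H : |H| ≥ A(log n)^{4+ε}}, J_1 = {H : (1/4)(log n)^{1+ε} ≤ |H| < (log n)^{2+ε}}, J_2 = {H : (log n)^{2+ε} ≤ |H| < (log n)^{3+ε}}, J_3 = {H : (log n)^{3+ε} ≤ |H| < A(log n)^{4+ε}}. Then the components outside I ∪ J_1 ∪ J_2 ∪ J_3 cover at most n/4 vertices, and hence at least one of the following holds: (i) the I-components cover ≥ n/2 vertices and |I| ≤ n/(A(log n)^{4+ε}); (ii) |J_1| ≥ n/(12(log n)^{2+ε}); (iii) |J_2| ≥ n/(12(log n)^{3+ε}); (iv) |J_3| ≥ n/(12A(log n)^{4+ε}). -/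

import Mathlib

/-- The size of a connected component of `G` with the vertex `x` removed. -/
noncomputable def compSize {V : Type*} (G : SimpleGraph V) (x : V)
    (c : (G.induce {v : V | v ≠ x}).ConnectedComponent) : ℕ :=
  c.supp.ncard

/-- The number of vertices covered by the components of `G − x` whose size satisfies `P`. -/
noncomputable def coverSize {V : Type*} (G : SimpleGraph V) (x : V) (P : ℕ → Prop) : ℕ :=
  {v : V | ∃ hv : v ≠ x,
    P (compSize G x ((G.induce {v' : V | v' ≠ x}).connectedComponentMk ⟨v, hv⟩))}.ncard

/-- The number of components of `G − x` whose size satisfies `P`. -/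
noncomputable def numComps {V : Type*} (G : SimpleGraph V) (x : V) (P : ℕ → Prop) : ℕ :=
  {c : (G.induce {v : V | v ≠ x}).ConnectedComponent | P (compSize G x c)}.ncard

/-!
Every component of `G − x` contains a neighbour of `x`, so there are fewer than
`n / (log n)^(1+ε)` of them, and the components of size below `B = (log n)^(1+ε) / 4` cover
fewer than `n / 4` vertices. If the `I`-components cover fewer than `n / 2` vertices and all
of (ii)–(iv) fail, each `J_i` covers fewer than `n / 12` vertices, so the `n - 1` vertices of
`G − x` are split into three parts of sizes `< n / 2`, `< n / 4`, `< n / 4`. That alone is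
not contradictory; the missing unit comes from the big components: each of them uses up
`B` of the budget `deg x · B < n / 4` of the small ones, and when `B < 1` there are no
small components at all.
-/

open Finset

namespace SimpleGraph

lemma ConnectedComponent.ncard_setOf_mk {W : Type*} [Finite W] {H : SimpleGraph W}
    [Fintype H.ConnectedComponent] (Q : H.ConnectedComponent → Prop) [DecidablePred Q] :
    {w | Q (H.connectedComponentMk w)}.ncard = ∑ c with Q c, c.supp.ncard := by
  have : {w | Q (H.connectedComponentMk w)} = ⋃ c ∈ {c | Q c}, c.supp := by
    ext w; simp
  rw [this, (Set.toFinite _).ncard_biUnion (fun _ _ ↦ Set.toFinite _)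
    fun _ _ _ _ h ↦ H.pairwise_disjoint_supp_connectedComponent h,
    finsum_mem_eq_finite_toFinset_sum _ (Set.toFinite _)]
  simp

lemma Connected.natCard_connectedComponent_induce_ne_le_degree {V : Type*} {G : SimpleGraph V}
    (hG : G.Connected) (x : V) [Fintype (G.neighborSet x)] :
    Nat.card (G.induce {v | v ≠ x}).ConnectedComponent ≤ G.degree x := by
  have hadj (c : G.ComponentCompl {x}) : ∃ y ∈ c, G.Adj x y := by
    obtain ⟨⟨y, z⟩, hy, rfl, hyz⟩ :=
      ComponentCompl.exists_adj_boundary_pair hG.preconnected (Set.singleton_nonempty x) c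
    exact ⟨y, hy, hyz.symm⟩
  choose f hfc hfx using hadj
  rw [← card_neighborSet_eq_degree, ← Nat.card_eq_fintype_card]
  refine Nat.card_le_card_of_injective (fun c ↦ ⟨f c, hfx c⟩) fun c d h ↦ ?_
  have hcd : f c = f d := congrArg Subtype.val h
  exact ComponentCompl.pairwise_disjoint.eq (Set.not_disjoint_iff.mpr ⟨f c, hfc c, hcd ▸ hfc d⟩)

end SimpleGraph

open SimpleGraph

section CoverSize

variable {V : Type*} {G : SimpleGraph V} {x : V} {P Q R : ℕ → Prop}

lemma coverSize_eq_sum [Finite V] [Fintype (G.induce {v | v ≠ x}).ConnectedComponent]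
    [DecidablePred P] : coverSize G x P = ∑ c with P (compSize G x c), compSize G x c := by
  have : {v | ∃ hv : v ≠ x,
        P (compSize G x ((G.induce {v' | v' ≠ x}).connectedComponentMk ⟨v, hv⟩))} =
      Subtype.val '' {w | P (compSize G x ((G.induce {v' | v' ≠ x}).connectedComponentMk w))} := by
    ext v; simp
  rw [coverSize, this, Set.ncard_image_of_injective _ Subtype.val_injective]
  exact ConnectedComponent.ncard_setOf_mk fun c ↦ P (compSize G x c)

lemma numComps_eq_card [Fintype (G.induce {v | v ≠ x}).ConnectedComponent] [DecidablePred P] :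
    numComps G x P = #{c | P (compSize G x c)} := by
  rw [numComps, ← Set.ncard_coe_finset, coe_filter_univ]

lemma coverSize_le_numComps_mul [Finite V] {β : ℝ} (h : ∀ k, P k → (k : ℝ) ≤ β) :
    (coverSize G x P : ℝ) ≤ numComps G x P * β := by
  classical
  have := Fintype.ofFinite (G.induce {v | v ≠ x}).ConnectedComponent
  rw [coverSize_eq_sum, numComps_eq_card]
  push_cast
  simpa using sum_le_card_nsmul _ _ _ fun c hc ↦ h _ (mem_filter.mp hc).2

lemma numComps_mul_le_coverSize [Finite V] {β : ℝ} (h : ∀ k, P k → β ≤ k) :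
    numComps G x P * β ≤ coverSize G x P := by
  classical
  have := Fintype.ofFinite (G.induce {v | v ≠ x}).ConnectedComponent
  rw [coverSize_eq_sum, numComps_eq_card]
  push_cast
  simpa using card_nsmul_le_sum _ _ _ fun c hc ↦ h _ (mem_filter.mp hc).2

lemma coverSize_eq_zero_of_numComps_eq_zero [Finite V] (h : numComps G x P = 0) :
    coverSize G x P = 0 := by
  classical
  have := Fintype.ofFinite (G.induce {v | v ≠ x}).ConnectedComponent
  rw [numComps_eq_card, card_eq_zero] at h
  rw [coverSize_eq_sum, h, sum_empty]

lemma coverSize_eq_zero_of_forall_eq_zero [Finite V] (h : ∀ k, P k → k = 0) :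
    coverSize G x P = 0 := by
  have := coverSize_le_numComps_mul (G := G) (x := x) (P := P) (β := 0) fun k hk ↦ by simp [h k hk]
  rw [mul_zero] at this
  exact Nat.le_zero.mp (by exact_mod_cast this)

lemma coverSize_add_coverSize_not_add_one [Finite V] :
    coverSize G x P + coverSize G x (fun k ↦ ¬ P k) + 1 = Nat.card V := by
  set S := {v | ∃ hv : v ≠ x,
    P (compSize G x ((G.induce {v' | v' ≠ x}).connectedComponentMk ⟨v, hv⟩))}
  have hx : x ∈ Sᶜ := fun ⟨hx, _⟩ ↦ hx rfl
  have hnot : {v | ∃ hv : v ≠ x,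
      ¬ P (compSize G x ((G.induce {v' | v' ≠ x}).connectedComponentMk ⟨v, hv⟩))} = Sᶜ \ {x} := by
    ext v; by_cases hv : v = x <;> simp [S, hv]
  rw [coverSize, coverSize, hnot, add_assoc, Set.ncard_sdiff_singleton_add_one hx,
    Set.ncard_add_ncard_compl]

lemma coverSize_le_add [Finite V] (h : ∀ k, P k → Q k ∨ R k) :
    coverSize G x P ≤ coverSize G x Q + coverSize G x R := by
  refine (Set.ncard_le_ncard ?_).trans (Set.ncard_union_le _ _)
  rintro v ⟨hv, hP⟩
  exact (h _ hP).imp (⟨hv, ·⟩) (⟨hv, ·⟩)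

lemma coverSize_band_le [Finite V] (b₀ b₁ b₂ b₃ : ℝ) :
    coverSize G x (fun k ↦ b₀ ≤ k ∧ k < b₃) ≤ coverSize G x (fun k ↦ b₀ ≤ k ∧ k < b₁) +
      coverSize G x (fun k ↦ b₁ ≤ k ∧ k < b₂) + coverSize G x (fun k ↦ b₂ ≤ k ∧ k < b₃) := by
  refine (coverSize_le_add (Q := fun k ↦ (b₀ ≤ k ∧ k < b₁) ∨ (b₁ ≤ k ∧ k < b₂))
    fun k hk ↦ ?_).trans (Nat.add_le_add_right (coverSize_le_add fun _ ↦ id) _)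
  rcases lt_or_ge (k : ℝ) b₂ with h₂ | h₂
  · exact .inl ((lt_or_ge (k : ℝ) b₁).imp (⟨hk.1, ·⟩) (⟨·, h₂⟩))
  · exact .inr ⟨h₂, hk.2⟩

lemma numComps_add_numComps_not_le_degree [Finite V] [Fintype (G.neighborSet x)]
    (hG : G.Connected) : numComps G x P + numComps G x (fun k ↦ ¬ P k) ≤ G.degree x := by
  have hsplit := Set.ncard_add_ncard_compl {c | P (compSize G x c)}
  rw [Set.compl_ofPred] at hsplit
  rw [numComps, numComps, hsplit]
  exact hG.natCard_connectedComponent_induce_ne_le_degree x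

lemma coverSize_lt_of_numComps_lt [Finite V] {β M : ℝ} (hβ : 0 < β)
    (h : ∀ k, P k → (k : ℝ) ≤ β) (hP : numComps G x P < M / β) : (coverSize G x P : ℝ) < M :=
  calc (coverSize G x P : ℝ) ≤ numComps G x P * β := coverSize_le_numComps_mul h
    _ < M := (lt_div_iff₀ hβ).mp hP

lemma coverSize_add_numComps_not_mul_le_degree_mul [Finite V] [Fintype (G.neighborSet x)]
    (hG : G.Connected) {β : ℝ} (hβ : 0 ≤ β) (h : ∀ k, P k → (k : ℝ) ≤ β) :
    coverSize G x P + numComps G x (fun k ↦ ¬ P k) * β ≤ G.degree x * β :=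
  calc (coverSize G x P : ℝ) + numComps G x (fun k ↦ ¬ P k) * β
      ≤ numComps G x P * β + numComps G x (fun k ↦ ¬ P k) * β := by
        gcongr; exact coverSize_le_numComps_mul h
    _ = ((numComps G x P + numComps G x (fun k ↦ ¬ P k) : ℕ) : ℝ) * β := by push_cast; ring
    _ ≤ G.degree x * β := by gcongr; exact_mod_cast numComps_add_numComps_not_le_degree hG

lemma coverSize_lt_of_degree_mul_lt [Finite V] [Fintype (G.neighborSet x)] (hG : G.Connected)
    {β M : ℝ} (hβ : 0 ≤ β) (h : ∀ k, P k → (k : ℝ) ≤ β) (hdeg : G.degree x * β < M) :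
    (coverSize G x P : ℝ) < M := by
  have := coverSize_add_numComps_not_mul_le_degree_mul (x := x) hG hβ h
  have : 0 ≤ (numComps G x (fun k ↦ ¬ P k) : ℝ) * β := by positivity
  linarith

theorem half_le_coverSize_or_quarter_le_coverSize [Finite V] [Fintype (G.neighborSet x)]
    (hG : G.Connected) (hV : 2 ≤ Nat.card V) {B b : ℝ}
    (hdeg : G.degree x * B < Nat.card V / 4) :
    (Nat.card V : ℝ) / 2 ≤ coverSize G x (fun k ↦ b ≤ k) ∨
      (Nat.card V : ℝ) / 4 ≤ coverSize G x (fun k ↦ B ≤ k ∧ k < b) := by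
  by_contra! ⟨hI, hJ⟩
  set S : ℕ → Prop := fun k ↦ (k : ℝ) < B
  have hpart := coverSize_add_coverSize_not_add_one (G := G) (x := x) (P := S)
  have hbig : coverSize G x (fun k ↦ ¬ S k) ≤
      coverSize G x (fun k ↦ b ≤ k) + coverSize G x (fun k ↦ B ≤ k ∧ k < b) :=
    coverSize_le_add fun k hk ↦ (le_or_gt b k).imp_right (⟨not_lt.mp hk, ·⟩)
  rcases lt_or_ge B 1 with hB | hB
  · have hS : coverSize G x S = 0 := coverSize_eq_zero_of_forall_eq_zero fun k hk ↦
      Nat.lt_one_iff.mp (by exact_mod_cast (hk : (k : ℝ) < B).trans hB)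
    have h2I : 2 * coverSize G x (fun k ↦ b ≤ k) < Nat.card V := by
      exact_mod_cast (by linarith : (2 * coverSize G x (fun k ↦ b ≤ k) : ℝ) < Nat.card V)
    have h4J : 4 * coverSize G x (fun k ↦ B ≤ k ∧ k < b) < Nat.card V := by
      exact_mod_cast
        (by linarith : (4 * coverSize G x (fun k ↦ B ≤ k ∧ k < b) : ℝ) < Nat.card V)
    omega
  · have hsmall : coverSize G x S + numComps G x (fun k ↦ ¬ S k) * B < Nat.card V / 4 :=
      (coverSize_add_numComps_not_mul_le_degree_mul hG (by positivity) fun k hk ↦ hk.le).trans_lt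
        hdeg
    have hpart' : (coverSize G x S : ℝ) + coverSize G x (fun k ↦ ¬ S k) + 1 = Nat.card V := by
      exact_mod_cast hpart
    rcases Nat.eq_zero_or_pos (numComps G x (fun k ↦ ¬ S k)) with hm | hm
    · have := coverSize_eq_zero_of_numComps_eq_zero hm
      have hV' : (2 : ℝ) ≤ Nat.card V := by exact_mod_cast hV
      simp only [this, hm, CharP.cast_eq_zero, zero_mul, add_zero] at hpart' hsmall
      linarith
    · have hmB : (1 : ℝ) ≤ numComps G x (fun k ↦ ¬ S k) * B :=
        one_le_mul_of_one_le_of_one_le (by exact_mod_cast hm) hB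
      have hbig' : (coverSize G x (fun k ↦ ¬ S k) : ℝ) ≤
          coverSize G x (fun k ↦ b ≤ k) + coverSize G x (fun k ↦ B ≤ k ∧ k < b) := by
        exact_mod_cast hbig
      linarith

end CoverSize

theorem stmt_9_general {V : Type*} [Fintype V] {G : SimpleGraph V} [DecidableRel G.Adj]
    (hT : G.IsTree) (x : V) (n : ℕ) (hn : Fintype.card V = n) (hn3 : 3 ≤ n)
    (ε A : ℝ) (hA : 0 < A)
    (hdeg : ∀ v : V, (G.degree v : ℝ) < (n : ℝ) / (Real.log n) ^ (1 + ε)) :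
    (coverSize G x (fun k =>
        ¬ (A * (Real.log n) ^ (4 + ε) ≤ (k : ℝ)) ∧
        ¬ ((1 / 4 : ℝ) * (Real.log n) ^ (1 + ε) ≤ (k : ℝ) ∧
            (k : ℝ) < A * (Real.log n) ^ (4 + ε))) : ℝ) ≤ (n : ℝ) / 4 ∧
    (((n : ℝ) / 2 ≤ (coverSize G x (fun k => A * (Real.log n) ^ (4 + ε) ≤ (k : ℝ)) : ℝ) ∧
        (numComps G x (fun k => A * (Real.log n) ^ (4 + ε) ≤ (k : ℝ)) : ℝ)
          ≤ (n : ℝ) / (A * (Real.log n) ^ (4 + ε))) ∨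
      (n : ℝ) / (12 * (Real.log n) ^ (2 + ε)) ≤ (numComps G x (fun k =>
          (1 / 4 : ℝ) * (Real.log n) ^ (1 + ε) ≤ (k : ℝ) ∧
          (k : ℝ) < (Real.log n) ^ (2 + ε)) : ℝ) ∨
      (n : ℝ) / (12 * (Real.log n) ^ (3 + ε)) ≤ (numComps G x (fun k =>
          (Real.log n) ^ (2 + ε) ≤ (k : ℝ) ∧ (k : ℝ) < (Real.log n) ^ (3 + ε)) : ℝ) ∨
      (n : ℝ) / (12 * A * (Real.log n) ^ (4 + ε)) ≤ (numComps G x (fun k =>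
          (Real.log n) ^ (3 + ε) ≤ (k : ℝ) ∧ (k : ℝ) < A * (Real.log n) ^ (4 + ε)) : ℝ)) := by
  rw [← Nat.card_eq_fintype_card] at hn
  subst hn
  have hL : 0 < Real.log (Nat.card V) :=
    Real.log_pos (by exact_mod_cast (by omega : 1 < Nat.card V))
  set L := Real.log (Nat.card V)
  have hdegB : G.degree x * (1 / 4 * L ^ (1 + ε)) < Nat.card V / 4 := by
    have := (lt_div_iff₀ (by positivity)).mp (hdeg x)
    linarith
  refine ⟨(coverSize_lt_of_degree_mul_lt hT.connected (by positivity) (fun k hk ↦ ?_) hdegB).le, ?_⟩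
  · by_contra! hkB
    exact hk.2 ⟨hkB.le, not_le.mp hk.1⟩
  rcases half_le_coverSize_or_quarter_le_coverSize (b := A * L ^ (4 + ε)) hT.connected
    (by omega) hdegB with hI | hJ
  · refine .inl ⟨hI, (le_div_iff₀ (by positivity)).mpr ?_⟩
    exact (numComps_mul_le_coverSize fun k hk ↦ hk).trans (by exact_mod_cast Set.ncard_le_card _)
  right
  by_contra! ⟨h1, h2, h3⟩
  rw [← div_div] at h1 h2
  rw [mul_assoc, ← div_div] at h3
  have hJ1 := coverSize_lt_of_numComps_lt (by positivity) (fun k hk ↦ hk.2.le) h1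
  have hJ2 := coverSize_lt_of_numComps_lt (by positivity) (fun k hk ↦ hk.2.le) h2
  have hJ3 := coverSize_lt_of_numComps_lt (by positivity) (fun k hk ↦ hk.2.le) h3
  have hband := (Nat.cast_le (α := ℝ)).mpr (coverSize_band_le (G := G) (x := x)
    (1 / 4 * L ^ (1 + ε)) (L ^ (2 + ε)) (L ^ (3 + ε)) (A * L ^ (4 + ε)))
  push_cast at hband
  linarith

theorem stmt_9 {V : Type*} [Fintype V] {G : SimpleGraph V} [DecidableRel G.Adj]
    (hT : G.IsTree) (x : V) (n : ℕ) (hn : Fintype.card V = n) (hn3 : 3 ≤ n)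
    (ε A : ℝ) (hε : 0 < ε) (hA : 0 < A)
    (hdeg : ∀ v : V, (G.degree v : ℝ) < (n : ℝ) / (Real.log n) ^ (1 + ε))
    (hcent : ∀ c : (G.induce {v : V | v ≠ x}).ConnectedComponent,
      (c.supp.ncard : ℝ) ≤ (n : ℝ) / 2) :
    (coverSize G x (fun k =>
        ¬ (A * (Real.log n) ^ (4 + ε) ≤ (k : ℝ)) ∧
        ¬ ((1 / 4 : ℝ) * (Real.log n) ^ (1 + ε) ≤ (k : ℝ) ∧
            (k : ℝ) < A * (Real.log n) ^ (4 + ε))) : ℝ) ≤ (n : ℝ) / 4 ∧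
    (((n : ℝ) / 2 ≤ (coverSize G x (fun k => A * (Real.log n) ^ (4 + ε) ≤ (k : ℝ)) : ℝ) ∧
        (numComps G x (fun k => A * (Real.log n) ^ (4 + ε) ≤ (k : ℝ)) : ℝ)
          ≤ (n : ℝ) / (A * (Real.log n) ^ (4 + ε))) ∨
      (n : ℝ) / (12 * (Real.log n) ^ (2 + ε)) ≤ (numComps G x (fun k =>
          (1 / 4 : ℝ) * (Real.log n) ^ (1 + ε) ≤ (k : ℝ) ∧
          (k : ℝ) < (Real.log n) ^ (2 + ε)) : ℝ) ∨
      (n : ℝ) / (12 * (Real.log n) ^ (3 + ε)) ≤ (numComps G x (fun k =>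
          (Real.log n) ^ (2 + ε) ≤ (k : ℝ) ∧ (k : ℝ) < (Real.log n) ^ (3 + ε)) : ℝ) ∨
      (n : ℝ) / (12 * A * (Real.log n) ^ (4 + ε)) ≤ (numComps G x (fun k =>
          (Real.log n) ^ (3 + ε) ≤ (k : ℝ) ∧ (k : ℝ) < A * (Real.log n) ^ (4 + ε)) : ℝ)) :=
  stmt_9_general hT x n hn hn3 ε A hA hdeg
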